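/- Under conditions (H1) and (H2), condition (H3′) implies condition (H3). That is: if for every point t lying in a face K ∈ ∂_k T with 0 ≤ k ≤ N−2 such that ν(t) = σ_T² and ℐ(t) contains at least two indices the matrix (ν_{ij}(t))_{i,j∈ℐ(t)} is negative semidefinite, then for every such point t the matrix (𝔼[X(t)X_{ij}(t)])_{i,j∈ℐ(t)} is negative definite. -/

import Mathlib

open MeasureTheory ProbabilityTheory Filter Real Set
open scoped ENNReal NNReal Topology

noncomputable section

variable {Ω : Type*}

/-- First-order partial derivative field `X_i(t) = ∂X(t)/∂t_i` (pathwise). -/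
def D1 {N : ℕ} (X : (Fin N → ℝ) → Ω → ℝ) (i : Fin N) (t : Fin N → ℝ) (ω : Ω) : ℝ :=
  fderiv ℝ (fun s => X s ω) t (Pi.single i 1)

/-- Second-order partial derivative field `X_{ij}(t) = ∂²X(t)/∂t_i∂t_j` (pathwise). -/
def D2 {N : ℕ} (X : (Fin N → ℝ) → Ω → ℝ) (i j : Fin N) (t : Fin N → ℝ) (ω : Ω) : ℝ :=
  fderiv ℝ (fun s => D1 X j s ω) t (Pi.single i 1)

/-- A finite family of real random variables is centered (multivariate) Gaussian:
every linear combination has a centered one-dimensional Gaussian law. -/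
def IsCenteredGaussianFamily [MeasurableSpace Ω] (P : Measure Ω) {m : ℕ}
    (f : Fin m → Ω → ℝ) : Prop :=
  ∀ c : Fin m → ℝ, ∃ v : ℝ≥0,
    Measure.map (fun ω => ∑ l, c l * f l ω) P = gaussianReal 0 v

/-- `X` is a centered Gaussian random field: every finite family consisting of values of the
field and of its first- and second-order partial derivatives is centered jointly Gaussian. -/
def IsGaussianField {N : ℕ} [MeasurableSpace Ω] (P : Measure Ω)
    (X : (Fin N → ℝ) → Ω → ℝ) : Prop :=
  ∀ (m : ℕ) (f : Fin m → Ω → ℝ),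
    (∀ l, (∃ t, f l = X t) ∨ (∃ i t, f l = D1 X i t) ∨ (∃ i j t, f l = D2 X i j t)) →
    IsCenteredGaussianFamily P f

/-- The variance function `ν(t) = Var(X(t)) = 𝔼[X(t)²]` (the field is centered). -/
def nuV {N : ℕ} [MeasurableSpace Ω] (P : Measure Ω) (X : (Fin N → ℝ) → Ω → ℝ)
    (t : Fin N → ℝ) : ℝ := ∫ ω, (X t ω) ^ 2 ∂P

/-- `σ_T² = sup_{t ∈ T} ν(t)`. -/
def sigmaT2 {N : ℕ} [MeasurableSpace Ω] (P : Measure Ω) (X : (Fin N → ℝ) → Ω → ℝ)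
    (T : Set (Fin N → ℝ)) : ℝ := sSup (nuV P X '' T)

/-- The face of the rectangle `∏ [a i, b i]` determined by `τ` and `ε`. -/
def face {N : ℕ} (a b : Fin N → ℝ) (τ : Finset (Fin N)) (ε : Fin N → Bool) :
    Set (Fin N → ℝ) :=
  {t | (∀ i ∈ τ, t i ∈ Set.Ioo (a i) (b i)) ∧ ∀ i ∉ τ, t i = if ε i then b i else a i}

/-- Canonical indexing of all faces of the rectangle (`ε` is normalized to `false` on `τ`,
so that each face appears exactly once). -/
def faceIdx (N : ℕ) : Finset (Finset (Fin N) × (Fin N → Bool)) :=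
  Finset.univ.filter fun p => ∀ i ∈ p.1, p.2 i = false

/-- Condition (H1): a.s. `C²` sample paths and mean-square Hölder continuous second
derivatives. -/
def H1 {N : ℕ} [MeasurableSpace Ω] (P : Measure Ω) (X : (Fin N → ℝ) → Ω → ℝ)
    (T : Set (Fin N → ℝ)) : Prop :=
  (∀ᵐ ω ∂P, ContDiff ℝ 2 fun s => X s ω) ∧
  ∃ C > (0:ℝ), ∃ δ > (0:ℝ), ∀ t ∈ T, ∀ t' ∈ T, ∀ i j : Fin N,
    ∫ ω, (D2 X i j t ω - D2 X i j t' ω) ^ 2 ∂P ≤ C * ‖t - t'‖ ^ (2 * δ)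

/-- Condition (H2): for `t ≠ t'` in `T`, the joint Gaussian vector of values, gradients and
second derivatives (indexed by `i ≤ j`) at `t` and `t'` is non-degenerate, i.e. every
nontrivial linear combination has positive variance. -/
def H2 {N : ℕ} [MeasurableSpace Ω] (P : Measure Ω) (X : (Fin N → ℝ) → Ω → ℝ)
    (T : Set (Fin N → ℝ)) : Prop :=
  ∀ t ∈ T, ∀ t' ∈ T, t ≠ t' →
    ∀ (c0 c1 : ℝ) (v0 v1 : Fin N → ℝ) (m0 m1 : Fin N → Fin N → ℝ),
      (∀ i j : Fin N, j < i → m0 i j = 0) → (∀ i j : Fin N, j < i → m1 i j = 0) →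
      ¬ (c0 = 0 ∧ c1 = 0 ∧ v0 = 0 ∧ v1 = 0 ∧ m0 = 0 ∧ m1 = 0) →
      0 < ∫ ω, (c0 * X t ω + ∑ i, v0 i * D1 X i t ω + ∑ i, ∑ j, m0 i j * D2 X i j t ω
          + c1 * X t' ω + ∑ i, v1 i * D1 X i t' ω + ∑ i, ∑ j, m1 i j * D2 X i j t' ω) ^ 2 ∂P

/-- The index set `ℐ(t) = {ℓ : 𝔼[X(t) X_ℓ(t)] = 0}`. -/
def Iset {N : ℕ} [MeasurableSpace Ω] (P : Measure Ω) (X : (Fin N → ℝ) → Ω → ℝ)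
    (t : Fin N → ℝ) : Set (Fin N) :=
  {ℓ | ∫ ω, X t ω * D1 X ℓ t ω ∂P = 0}

/-- Negative definiteness of the submatrix `(M i j)_{i,j ∈ S}`. -/
def NegDefOn {N : ℕ} (M : Fin N → Fin N → ℝ) (S : Set (Fin N)) : Prop :=
  ∀ c : Fin N → ℝ, (∀ i ∉ S, c i = 0) → c ≠ 0 → ∑ i, ∑ j, c i * c j * M i j < 0

/-- Negative semidefiniteness of the submatrix `(M i j)_{i,j ∈ S}`. -/
def NegSemidefOn {N : ℕ} (M : Fin N → Fin N → ℝ) (S : Set (Fin N)) : Prop :=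
  ∀ c : Fin N → ℝ, (∀ i ∉ S, c i = 0) → ∑ i, ∑ j, c i * c j * M i j ≤ 0

/-- Condition (H3). -/
def H3 {N : ℕ} [MeasurableSpace Ω] (P : Measure Ω) (X : (Fin N → ℝ) → Ω → ℝ)
    (a b : Fin N → ℝ) (T : Set (Fin N → ℝ)) : Prop :=
  ∀ (τ : Finset (Fin N)) (ε : Fin N → Bool), (τ.card : ℤ) ≤ (N : ℤ) - 2 →
    ∀ t ∈ face a b τ ε, nuV P X t = sigmaT2 P X T →
      (∃ ℓ₁ ∈ Iset P X t, ∃ ℓ₂ ∈ Iset P X t, ℓ₁ ≠ ℓ₂) →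
      NegDefOn (fun i j => ∫ ω, X t ω * D2 X i j t ω ∂P) (Iset P X t)

/-- `M_u(K)`: the number of local maxima of `X` above level `u` on the face `K = (τ, ε)`. -/
def Mloc {N : ℕ} (X : (Fin N → ℝ) → Ω → ℝ) (a b : Fin N → ℝ)
    (τ : Finset (Fin N)) (ε : Fin N → Bool) (u : ℝ) (ω : Ω) : ℕ∞ :=
  {t | t ∈ face a b τ ε ∧ u ≤ X t ω ∧ (∀ i ∈ τ, D1 X i t ω = 0) ∧
      NegDefOn (fun i j => D2 X i j t ω) (↑τ : Set (Fin N))}.encard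

/-- `M_u^E(K)`: the number of extended outward local maxima of `X` above level `u` on the
face `K = (τ, ε)`. -/
def MExt {N : ℕ} (X : (Fin N → ℝ) → Ω → ℝ) (a b : Fin N → ℝ)
    (τ : Finset (Fin N)) (ε : Fin N → Bool) (u : ℝ) (ω : Ω) : ℕ∞ :=
  {t | t ∈ face a b τ ε ∧ u ≤ X t ω ∧ (∀ i ∈ τ, D1 X i t ω = 0) ∧
      NegDefOn (fun i j => D2 X i j t ω) (↑τ : Set (Fin N)) ∧
      ∀ j ∉ τ, 0 ≤ (if ε j then (1:ℝ) else -1) * D1 X j t ω}.encard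

/-- The number of negative eigenvalues (the index) of a real symmetric matrix. -/
def negEigCount {n : Type*} [Fintype n] [DecidableEq n] (M : Matrix n n ℝ) : ℕ :=
  if h : M.IsHermitian then (Finset.univ.filter fun i => h.eigenvalues i < 0).card else 0

/-- The Hessian `∇²X_{|K}(t)` restricted to the coordinates in `τ`. -/
def hessOn {N : ℕ} (X : (Fin N → ℝ) → Ω → ℝ) (τ : Finset (Fin N))
    (t : Fin N → ℝ) (ω : Ω) : Matrix ↥τ ↥τ ℝ :=
  Matrix.of fun i j => D2 X i.1 j.1 t ω

/-- `μ_i(K,u)`: the number of extended outward critical points of index `i` above level `u`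
on the face `K = (τ, ε)`. -/
def muIdx {N : ℕ} (X : (Fin N → ℝ) → Ω → ℝ) (a b : Fin N → ℝ)
    (τ : Finset (Fin N)) (ε : Fin N → Bool) (i : ℕ) (u : ℝ) (ω : Ω) : ℕ∞ :=
  {t | t ∈ face a b τ ε ∧ u ≤ X t ω ∧ (∀ l ∈ τ, D1 X l t ω = 0) ∧
      negEigCount (hessOn X τ t ω) = i ∧
      ∀ j ∉ τ, 0 ≤ (if ε j then (1:ℝ) else -1) * D1 X j t ω}.encard

/-- The excursion event `{sup_{t ∈ T} X(t) ≥ u}`. -/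
def excursion {N : ℕ} (X : (Fin N → ℝ) → Ω → ℝ) (T : Set (Fin N → ℝ)) (u : ℝ) : Set Ω :=
  {ω | u ≤ sSup ((fun t => X t ω) '' T)}

/-- Conditional variance `Var(ξ | η) = 𝔼[(ξ - 𝔼[ξ | σ(η)])²]`. -/
def condVarGiven [MeasurableSpace Ω] (P : Measure Ω) (ξ : Ω → ℝ) {β : Type*}
    [MeasurableSpace β] (η : Ω → β) : ℝ :=
  ∫ ω, (ξ ω - (P[ξ | MeasurableSpace.comap η inferInstance]) ω) ^ 2 ∂P

/-- The standard normal tail probability `Ψ`. -/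
def gaussTail (x : ℝ) : ℝ := ∫ y in Set.Ici x, (Real.sqrt (2 * π))⁻¹ * Real.exp (-y ^ 2 / 2)

end


section Aux

open MeasureTheory ProbabilityTheory Real

lemma integrable_sq_gaussianReal (v : ℝ≥0) :
    Integrable (fun x : ℝ => x ^ 2) (gaussianReal 0 v) := by
  by_cases hv : v = 0
  · subst hv
    rw [gaussianReal_zero_var]
    refine ⟨(measurable_id.pow_const 2).aestronglyMeasurable, ?_⟩
    simp only [HasFiniteIntegral]
    rw [lintegral_dirac' _ (by measurability)]
    simp
  · rw [gaussianReal_of_var_ne_zero _ hv,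
      integrable_withDensity_iff (measurable_gaussianPDF _ _)
        (Filter.Eventually.of_forall fun x => by
          simp [gaussianPDF_def, ENNReal.ofReal_lt_top])]
    have hv' : (0:ℝ) < (v:ℝ) := by positivity
    have hb : (0:ℝ) < 1 / (2 * (v:ℝ)) := by positivity
    have h := (integrable_rpow_mul_exp_neg_mul_sq hb
      (by norm_num : (-1:ℝ) < 2)).const_mul ((Real.sqrt (2 * π * v))⁻¹)
    rw [show ((2:ℝ)) = ((2:ℕ):ℝ) by norm_num] at h
    simp only [Real.rpow_natCast] at h
    refine h.congr (Filter.Eventually.of_forall fun x => ?_)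
    have harg : -(1 / (2 * (v:ℝ))) * x ^ 2 = -(x - 0) ^ 2 / (2 * (v:ℝ)) := by
      field_simp
      ring
    simp only [gaussianPDF_def, ENNReal.toReal_ofReal (gaussianPDFReal_nonneg 0 v x)]
    simp only [gaussianPDFReal]
    push_cast
    rw [harg]
    ring

lemma aemeasurable_of_map_gaussian {Ω : Type*} [MeasurableSpace Ω] {P : Measure Ω}
    [IsProbabilityMeasure P] {g : Ω → ℝ} {v : ℝ≥0}
    (h : Measure.map g P = gaussianReal 0 v) : AEMeasurable g P := by
  by_contra hng
  rw [Measure.map_of_not_aemeasurable hng] at h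
  have h1 : (gaussianReal 0 v) Set.univ = 1 := measure_univ
  rw [← h] at h1
  simp at h1

lemma integrable_sq_of_map_gaussian {Ω : Type*} [MeasurableSpace Ω] {P : Measure Ω}
    [IsProbabilityMeasure P] {g : Ω → ℝ} {v : ℝ≥0}
    (h : Measure.map g P = gaussianReal 0 v) :
    Integrable (fun ω => g ω ^ 2) P := by
  have hg := aemeasurable_of_map_gaussian h
  have h2 : Integrable (fun x : ℝ => x ^ 2) (Measure.map g P) := by
    rw [h]; exact integrable_sq_gaussianReal v
  exact (integrable_map_measure
    (by exact (measurable_id.pow_const 2).aestronglyMeasurable) hg).mp h2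

lemma integrable_mul_of_sq {Ω : Type*} [MeasurableSpace Ω] {P : Measure Ω}
    {f g : Ω → ℝ} (hf : AEMeasurable f P) (hg : AEMeasurable g P)
    (hf2 : Integrable (fun ω => f ω ^ 2) P) (hg2 : Integrable (fun ω => g ω ^ 2) P) :
    Integrable (fun ω => f ω * g ω) P := by
  refine (hf2.add hg2).mono' (hf.mul hg).aestronglyMeasurable
    (Filter.Eventually.of_forall fun ω => ?_)
  simp only [Pi.add_apply]
  rw [Real.norm_eq_abs, abs_mul]
  nlinarith [sq_nonneg (|f ω| - |g ω|), sq_abs (f ω), sq_abs (g ω),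
    sq_nonneg (f ω), sq_nonneg (g ω)]

end Aux

/-- under (H1) and (H2), condition (H3′) implies condition (H3). -/
theorem h3prime_implies_h3
    {Ω : Type*} [MeasurableSpace Ω] (P : Measure Ω) [IsProbabilityMeasure P]
    {N : ℕ} (hN : 0 < N) (a b : Fin N → ℝ) (hab : ∀ i, a i < b i)
    (X : (Fin N → ℝ) → Ω → ℝ)
    (hGauss : IsGaussianField P X)
    (h1 : H1 P X (Set.Icc a b)) (h2 : H2 P X (Set.Icc a b))
    (h3' : ∀ (τ : Finset (Fin N)) (ε : Fin N → Bool), (τ.card : ℤ) ≤ (N : ℤ) - 2 →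
      ∀ t ∈ face a b τ ε, nuV P X t = sigmaT2 P X (Set.Icc a b) →
        (∃ ℓ₁ ∈ Iset P X t, ∃ ℓ₂ ∈ Iset P X t, ℓ₁ ≠ ℓ₂) →
        NegSemidefOn (fun i j => 2 * ((∫ ω, X t ω * D2 X i j t ω ∂P) +
          ∫ ω, D1 X i t ω * D1 X j t ω ∂P)) (Iset P X t)) :
    H3 P X a b (Set.Icc a b) := by
  intro τ ε hcard t ht hν hI c hc hc0
  -- t is in the rectangle
  have hmem : t ∈ Set.Icc a b := by
    constructor <;> intro i
    · by_cases hi : i ∈ τ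
      · exact ((ht.1 i hi).1).le
      · rw [ht.2 i hi]; split <;> [exact (hab i).le; exact le_rfl]
    · by_cases hi : i ∈ τ
      · exact ((ht.1 i hi).2).le
      · rw [ht.2 i hi]; split <;> [exact le_rfl; exact (hab i).le]
  have ha : a ∈ Set.Icc a b := ⟨le_rfl, fun i => (hab i).le⟩
  have hb' : b ∈ Set.Icc a b := ⟨fun i => (hab i).le, le_rfl⟩
  have hab' : a ≠ b := fun h => absurd (congrFun h ⟨0, hN⟩) (hab ⟨0, hN⟩).ne
  -- a second point distinct from t
  obtain ⟨t', ht', hne⟩ : ∃ t' ∈ Set.Icc a b, t ≠ t' := by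
    by_cases hta : t = a
    · exact ⟨b, hb', hta ▸ hab'⟩
    · exact ⟨a, ha, hta⟩
  -- positivity of the variance of ∑ c i X_i(t) from (H2)
  have hQ := h2 t hmem t' ht' hne 0 0 c 0 0 0 (fun _ _ _ => rfl) (fun _ _ _ => rfl)
    (fun h => hc0 h.2.2.1)
  simp only [zero_mul, Pi.zero_apply, Finset.sum_const_zero, add_zero, zero_add] at hQ
  -- integrability facts
  have hmap : ∀ i : Fin N, ∃ v : ℝ≥0,
      Measure.map (D1 X i t) P = gaussianReal 0 v := by
    intro i
    obtain ⟨v, hv⟩ := hGauss 1 (fun _ => D1 X i t)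
      (fun _ => Or.inr (Or.inl ⟨i, t, rfl⟩)) (fun _ => 1)
    refine ⟨v, ?_⟩
    simpa only [Fin.sum_univ_one, one_mul] using hv
  have hmeas : ∀ i : Fin N, AEMeasurable (D1 X i t) P := fun i =>
    (hmap i).choose_spec |> aemeasurable_of_map_gaussian
  have hsq : ∀ i : Fin N, Integrable (fun ω => D1 X i t ω ^ 2) P := fun i =>
    (hmap i).choose_spec |> integrable_sq_of_map_gaussian
  have hprod : ∀ i j : Fin N, Integrable (fun ω => D1 X i t ω * D1 X j t ω) P :=
    fun i j => integrable_mul_of_sq (hmeas i) (hmeas j) (hsq i) (hsq j)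
  -- expand the variance
  have hexp : (∫ ω, (∑ i, c i * D1 X i t ω) ^ 2 ∂P)
      = ∑ i, ∑ j, c i * c j * ∫ ω, D1 X i t ω * D1 X j t ω ∂P := by
    have step1 : (∫ ω, (∑ i, c i * D1 X i t ω) ^ 2 ∂P)
        = ∫ ω, ∑ i, ∑ j, (c i * c j) * (D1 X i t ω * D1 X j t ω) ∂P := by
      congr 1
      funext ω
      rw [sq, Finset.sum_mul_sum]
      exact Finset.sum_congr rfl fun i _ => Finset.sum_congr rfl fun j _ => by ring
    rw [step1, integral_finset_sum _ (fun i _ => integrable_finset_sum _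
      (fun j _ => (hprod i j).const_mul _))]
    exact Finset.sum_congr rfl fun i _ => by
      rw [integral_finset_sum _ (fun j _ => (hprod i j).const_mul _)]
      exact Finset.sum_congr rfl fun j _ => integral_const_mul _ _
  rw [hexp] at hQ
  -- the semidefiniteness hypothesis
  have hS := h3' τ ε hcard t ht hν hI c hc
  have hsplit : ∑ i, ∑ j, c i * c j * (2 * ((∫ ω, X t ω * D2 X i j t ω ∂P) +
        ∫ ω, D1 X i t ω * D1 X j t ω ∂P))
      = 2 * (∑ i, ∑ j, c i * c j * ∫ ω, X t ω * D2 X i j t ω ∂P)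
        + 2 * (∑ i, ∑ j, c i * c j * ∫ ω, D1 X i t ω * D1 X j t ω ∂P) := by
    rw [Finset.mul_sum, Finset.mul_sum, ← Finset.sum_add_distrib]
    refine Finset.sum_congr rfl fun i _ => ?_
    rw [Finset.mul_sum, Finset.mul_sum, ← Finset.sum_add_distrib]
    exact Finset.sum_congr rfl fun j _ => by ring
  rw [hsplit] at hS
  linarith
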